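/- arXiv:1312.2755 — 4 statements merged into one kernel-verified Lean document; each statement's English description precedes it below -/
import Mathlib

section
/- The quasispecies distribution satisfies the recurrence: ρ*_0 = (σe^{-a} - 1)/(σ - 1), and for k ≥ 1, ρ*_k = (a^k/k!) ρ*_0 + (1/σ) Σ_{l=1}^{k} (a^{k-l}/(k-l)!) ρ*_l. -/
/-!
Write `S_k = ∑_{i ≥ 1} i^k / σ^i`, so that `ρ*_k = (σe^{-a} - 1) (a^k/k!) S_k`. Expanding
`(i + 1)^k` binomially inside `σ S_k - 1 = ∑_{i ≥ 1} (i + 1)^k / σ^i` gives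
`∑_{l=0}^k C(k,l) S_l = σ S_k - 1`, and `S_0 = 1/(σ - 1)` is a geometric series.
Since `(a^{k-l}/(k-l)!) (a^l/l!) = (a^k/k!) C(k,l)`, the recurrence is this identity
multiplied by `(σe^{-a} - 1) a^k / (σ k!)`.
-/

open Real

/-- The quasispecies distribution: `ρ*_k = (σ e^{-a} - 1) (a^k/k!) ∑_{i≥1} i^k/σ^i`. -/
noncomputable def quasiRho (σ a : ℝ) (k : ℕ) : ℝ :=
  (σ * Real.exp (-a) - 1) * (a ^ k / (Nat.factorial k : ℝ)) *
    ∑' i : ℕ, ((i + 1 : ℕ) : ℝ) ^ k / σ ^ (i + 1)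

/-- `S_k = Li_{-k}(1/σ)`, summed over `i + 1` for `i : ℕ`. -/
noncomputable def polylogNegInv (σ : ℝ) (k : ℕ) : ℝ :=
  ∑' i : ℕ, ((i + 1 : ℕ) : ℝ) ^ k / σ ^ (i + 1)

lemma quasiRho_eq_mul_polylogNegInv (σ a : ℝ) (k : ℕ) :
    quasiRho σ a k = (σ * Real.exp (-a) - 1) * (a ^ k / k.factorial) * polylogNegInv σ k :=
  rfl

lemma pow_div_factorial_mul_pow_div_factorial {K : Type*} [Field K] [CharZero K] (x : K)
    {l k : ℕ} (hlk : l ≤ k) :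
    x ^ (k - l) / (k - l).factorial * (x ^ l / l.factorial) = x ^ k / k.factorial * k.choose l := by
  have hk : (k.factorial : K) ≠ 0 := Nat.cast_ne_zero.mpr k.factorial_ne_zero
  rw [Nat.cast_choose K hlk, ← pow_sub_mul_pow x hlk]
  field_simp

section PolylogNegInv

variable {σ : ℝ} (hσ : 1 < |σ|)
include hσ

lemma summable_polylogNegInv_terms (k : ℕ) :
    Summable fun i : ℕ => ((i + 1 : ℕ) : ℝ) ^ k / σ ^ (i + 1) := by
  have hr : ‖σ⁻¹‖ < 1 := by simpa using inv_lt_one_of_one_lt₀ hσ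
  have hgeom := summable_pow_mul_geometric_of_norm_lt_one k hr
  refine ((summable_nat_add_iff 1).mpr hgeom).congr fun i => ?_
  push_cast
  rw [inv_pow, div_eq_mul_inv]

lemma polylogNegInv_zero : polylogNegInv σ 0 = 1 / (σ - 1) := by
  have hσ0 : σ ≠ 0 := by rintro rfl; norm_num at hσ
  have hσ1 : σ - 1 ≠ 0 := by rintro h; norm_num [sub_eq_zero.mp h] at hσ
  have hr : ‖σ⁻¹‖ < 1 := by simpa using inv_lt_one_of_one_lt₀ hσ
  have hgeom : polylogNegInv σ 0 = σ⁻¹ * ∑' i : ℕ, σ⁻¹ ^ i := by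
    rw [polylogNegInv, ← tsum_mul_left]
    refine tsum_congr fun i => ?_
    rw [pow_zero, one_div, ← inv_pow, pow_succ']
  rw [hgeom, tsum_geometric_of_norm_lt_one hr]
  field_simp

lemma sum_choose_mul_polylogNegInv (k : ℕ) :
    ∑ l ∈ Finset.range (k + 1), (k.choose l : ℝ) * polylogNegInv σ l =
      σ * polylogNegInv σ k - 1 := by
  have hσ0 : σ ≠ 0 := by rintro rfl; norm_num at hσ
  have hshift :
      σ * polylogNegInv σ k - 1 = ∑' i : ℕ, ((i + 2 : ℕ) : ℝ) ^ k / σ ^ (i + 1) := by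
    rw [polylogNegInv, (summable_polylogNegInv_terms hσ k).tsum_eq_zero_add, mul_add,
      ← tsum_mul_left, zero_add, Nat.cast_one, one_pow, pow_one, mul_one_div_cancel hσ0,
      add_sub_cancel_left]
    refine tsum_congr fun i => ?_
    field_simp
    ring_nf
  calc ∑ l ∈ Finset.range (k + 1), (k.choose l : ℝ) * polylogNegInv σ l
      = ∑' i : ℕ, ∑ l ∈ Finset.range (k + 1),
          (k.choose l : ℝ) * (((i + 1 : ℕ) : ℝ) ^ l / σ ^ (i + 1)) := by
        simp only [polylogNegInv, ← tsum_mul_left]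
        exact (Summable.tsum_finsetSum fun l _ =>
          (summable_polylogNegInv_terms hσ l).mul_left _).symm
    _ = ∑' i : ℕ, ((i + 2 : ℕ) : ℝ) ^ k / σ ^ (i + 1) := by
        refine tsum_congr fun i => ?_
        rw [show ((i + 2 : ℕ) : ℝ) = ((i + 1 : ℕ) : ℝ) + 1 by push_cast; ring, add_pow,
          Finset.sum_div]
        refine Finset.sum_congr rfl fun l _ => ?_
        ring
    _ = σ * polylogNegInv σ k - 1 := hshift.symm

end PolylogNegInv

theorem quasiRho_recurrence_general (σ a : ℝ) (hσ : 1 < σ) :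
    quasiRho σ a 0 = (σ * Real.exp (-a) - 1) / (σ - 1) ∧
    ∀ k : ℕ, 1 ≤ k →
      quasiRho σ a k =
        (a ^ k / (Nat.factorial k : ℝ)) * quasiRho σ a 0 +
          (1 / σ) * ∑ l ∈ Finset.Icc 1 k,
            (a ^ (k - l) / (Nat.factorial (k - l) : ℝ)) * quasiRho σ a l := by
  have hσ' : 1 < |σ| := by rwa [abs_of_pos (by linarith)]
  have hσ0 : σ ≠ 0 := by linarith
  have hσ1 : σ - 1 ≠ 0 := by linarith
  have hρ₀ : quasiRho σ a 0 = (σ * Real.exp (-a) - 1) / (σ - 1) := by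
    rw [quasiRho_eq_mul_polylogNegInv, polylogNegInv_zero hσ']
    simp [div_eq_mul_inv]
  refine ⟨hρ₀, fun k _ => ?_⟩
  have hsum : ∑ l ∈ Finset.Icc 1 k, a ^ (k - l) / (k - l).factorial * quasiRho σ a l =
      (σ * Real.exp (-a) - 1) * (a ^ k / k.factorial) *
        ∑ l ∈ Finset.Icc 1 k, (k.choose l : ℝ) * polylogNegInv σ l := by
    rw [Finset.mul_sum]
    refine Finset.sum_congr rfl fun l hl => ?_
    rw [quasiRho_eq_mul_polylogNegInv]
    linear_combination (σ * Real.exp (-a) - 1) * polylogNegInv σ l *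
      pow_div_factorial_mul_pow_div_factorial a (Finset.mem_Icc.mp hl).2
  have hchoose : ∑ l ∈ Finset.Icc 1 k, (k.choose l : ℝ) * polylogNegInv σ l =
      σ * polylogNegInv σ k - 1 - 1 / (σ - 1) := by
    rw [← sum_choose_mul_polylogNegInv hσ' k, Finset.sum_range_eq_add_Ico _ k.add_one_pos,
      polylogNegInv_zero hσ', Finset.Ico_add_one_right_eq_Icc]
    simp
  rw [hsum, hchoose, hρ₀, quasiRho_eq_mul_polylogNegInv]
  field_simp
  ring

/-- The quasispecies distribution satisfies the recurrence
`ρ*_0 = (σe^{-a} - 1)/(σ - 1)` and, for `k ≥ 1`,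
`ρ*_k = (a^k/k!) ρ*_0 + (1/σ) ∑_{l=1}^{k} (a^{k-l}/(k-l)!) ρ*_l`. -/
theorem quasiRho_recurrence (σ a : ℝ) (hσ : 1 < σ) (ha : 0 < a)
    (h : 1 < σ * Real.exp (-a)) :
    quasiRho σ a 0 = (σ * Real.exp (-a) - 1) / (σ - 1) ∧
    ∀ k : ℕ, 1 ≤ k →
      quasiRho σ a k =
        (a ^ k / (Nat.factorial k : ℝ)) * quasiRho σ a 0 +
          (1 / σ) * ∑ l ∈ Finset.Icc 1 k,
            (a ^ (k - l) / (Nat.factorial (k - l) : ℝ)) * quasiRho σ a l :=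
  quasiRho_recurrence_general σ a hσ
end

section
/- The sequence defined by ρ*_0 = (σe^{-a}-1)/(σ-1) and ρ*_k = (e^{-a}/((σ-1)ρ*_0 + 1 - e^{-a})) (σ (a^k/k!) ρ*_0 + Σ_{l=1}^{k-1} (a^{k-l}/(k-l)!) ρ*_l) for k ≥ 1 coincides with the sequence given by the explicit formula ρ*_k = (σe^{-a}-1)(a^k/k!) Σ_{i≥1} i^k/σ^i. -/
/-!
Write `S_k = ∑_{i ≥ 1} i^k / σ^i`. Shifting the summation index and expanding `(i + 1)^k`
binomially gives `(σ - 1) S_k = 1 + ∑_{l < k} C(k, l) S_l`, and `S_0 = 1 / (σ - 1)`.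
Multiplied by `(σ e^{-a} - 1) a^k / k!` this is the recurrence, once one notices that its
prefactor `e^{-a} / ((σ - 1) ρ*_0 + 1 - e^{-a})` is `1 / (σ - 1)`. A sequence satisfying the
recurrence is determined by strong induction.
-/

open Real

open scoped Nat

noncomputable def geomMoment (σ : ℝ) (k : ℕ) : ℝ :=
  ∑' i : ℕ, ((i + 1 : ℕ) : ℝ) ^ k / σ ^ (i + 1)

lemma pow_div_factorial_mul_pow_div_factorial_s3 (a : ℝ) {k l : ℕ} (hl : l ≤ k) :
    a ^ (k - l) / (k - l)! * (a ^ l / l !) = k.choose l * (a ^ k / k !) := by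
  rw [Nat.cast_choose ℝ hl, ← pow_sub_mul_pow a hl]
  field_simp

section geomMoment

variable {σ : ℝ}

lemma ne_zero_of_one_lt_abs (hσ : 1 < |σ|) : σ ≠ 0 := by
  rintro rfl; norm_num at hσ

lemma sub_one_ne_zero_of_one_lt_abs (hσ : 1 < |σ|) : σ - 1 ≠ 0 := by
  rw [sub_ne_zero]; rintro rfl; norm_num at hσ

lemma norm_inv_lt_one_of_one_lt_abs (hσ : 1 < |σ|) : ‖σ⁻¹‖ < 1 := by
  rw [norm_inv, Real.norm_eq_abs]
  exact inv_lt_one_of_one_lt₀ hσ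

lemma summable_geomMoment (hσ : 1 < |σ|) (k : ℕ) :
    Summable fun i : ℕ => ((i + 1 : ℕ) : ℝ) ^ k / σ ^ (i + 1) := by
  have := summable_pow_mul_geometric_of_norm_lt_one k (norm_inv_lt_one_of_one_lt_abs hσ)
  refine ((summable_nat_add_iff 1).2 this).congr fun i => ?_
  rw [div_eq_mul_inv, inv_pow]

lemma geomMoment_zero (hσ : 1 < |σ|) : geomMoment σ 0 = (σ - 1)⁻¹ := by
  have hσ0 := ne_zero_of_one_lt_abs hσ
  have hσ1 := sub_one_ne_zero_of_one_lt_abs hσ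
  calc geomMoment σ 0 = σ⁻¹ * ∑' i : ℕ, σ⁻¹ ^ i := by
        rw [geomMoment, ← tsum_mul_left]
        congr 1 with i
        rw [pow_zero, one_div, ← inv_pow, pow_succ']
    _ = (σ - 1)⁻¹ := by
        rw [tsum_geometric_of_norm_lt_one (norm_inv_lt_one_of_one_lt_abs hσ)]
        field_simp

lemma mul_geomMoment (hσ : 1 < |σ|) (k : ℕ) :
    σ * geomMoment σ k = 1 + ∑ l ∈ Finset.range (k + 1), (k.choose l : ℝ) * geomMoment σ l := by
  have hσ0 := ne_zero_of_one_lt_abs hσ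
  have hshift : Summable fun i : ℕ => ((i + 1 : ℕ) : ℝ) ^ k / σ ^ i := by
    refine ((summable_geomMoment hσ k).mul_left σ).congr fun i => ?_
    rw [pow_succ]
    field_simp
  have hbinom (i : ℕ) : ((i + 1 + 1 : ℕ) : ℝ) ^ k / σ ^ (i + 1) =
      ∑ l ∈ Finset.range (k + 1), (k.choose l : ℝ) * (((i + 1 : ℕ) : ℝ) ^ l / σ ^ (i + 1)) := by
    rw [Nat.cast_succ _, add_pow, Finset.sum_div]
    refine Finset.sum_congr rfl fun l _ => ?_
    ring
  calc σ * geomMoment σ k = ∑' i : ℕ, ((i + 1 : ℕ) : ℝ) ^ k / σ ^ i := by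
        rw [geomMoment, ← tsum_mul_left]
        congr 1 with i
        rw [pow_succ]
        field_simp
    _ = 1 + ∑' i : ℕ, ((i + 1 + 1 : ℕ) : ℝ) ^ k / σ ^ (i + 1) := by
        rw [hshift.tsum_eq_zero_add]
        norm_num
    _ = 1 + ∑ l ∈ Finset.range (k + 1), (k.choose l : ℝ) * geomMoment σ l := by
        simp_rw [hbinom, geomMoment, ← tsum_mul_left]
        rw [Summable.tsum_finsetSum fun l _ => (summable_geomMoment hσ l).mul_left _]

lemma sub_one_mul_geomMoment (hσ : 1 < |σ|) {k : ℕ} (hk : 1 ≤ k) :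
    (σ - 1) * geomMoment σ k =
      σ / (σ - 1) + ∑ l ∈ Finset.Icc 1 (k - 1), (k.choose l : ℝ) * geomMoment σ l := by
  have hσ1 := sub_one_ne_zero_of_one_lt_abs hσ
  have h := mul_geomMoment hσ k
  rw [Finset.sum_range_succ, Nat.range_eq_Icc_zero_sub_one _ (by omega),
    ← Finset.add_sum_Ioc_eq_sum_Icc (Nat.zero_le _), ← Finset.Icc_add_one_left_eq_Ioc,
    geomMoment_zero hσ] at h
  rw [show σ / (σ - 1) = 1 + (σ - 1)⁻¹ by field_simp; ring]
  simp only [Nat.choose_zero_right, Nat.choose_self, Nat.cast_one, one_mul] at h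
  linarith

end geomMoment

section quasiRho

variable {σ : ℝ} (a : ℝ)

lemma quasiRho_eq_mul_geomMoment (k : ℕ) :
    quasiRho σ a k = (σ * exp (-a) - 1) * (a ^ k / k !) * geomMoment σ k := rfl

lemma quasiRho_zero (hσ : 1 < |σ|) : quasiRho σ a 0 = (σ * exp (-a) - 1) / (σ - 1) := by
  rw [quasiRho_eq_mul_geomMoment, geomMoment_zero hσ]
  simp [div_eq_mul_inv]

lemma sub_one_mul_quasiRho (hσ : 1 < |σ|) {k : ℕ} (hk : 1 ≤ k) :
    (σ - 1) * quasiRho σ a k = σ * (a ^ k / k !) * quasiRho σ a 0 +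
      ∑ l ∈ Finset.Icc 1 (k - 1), a ^ (k - l) / (k - l)! * quasiRho σ a l := by
  have hterm : ∀ l ∈ Finset.Icc 1 (k - 1), a ^ (k - l) / (k - l)! * quasiRho σ a l =
      (σ * exp (-a) - 1) * (a ^ k / k !) * (k.choose l * geomMoment σ l) := fun l hl => by
    rw [quasiRho_eq_mul_geomMoment]
    linear_combination (σ * exp (-a) - 1) * geomMoment σ l *
      pow_div_factorial_mul_pow_div_factorial_s3 a (k := k) (l := l) (by grind)
  calc (σ - 1) * quasiRho σ a k
        = (σ * exp (-a) - 1) * (a ^ k / k !) * ((σ - 1) * geomMoment σ k) := by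
        rw [quasiRho_eq_mul_geomMoment]; ring
    _ = (σ * exp (-a) - 1) * (a ^ k / k !) *
        (σ / (σ - 1) + ∑ l ∈ Finset.Icc 1 (k - 1), (k.choose l : ℝ) * geomMoment σ l) := by
        rw [sub_one_mul_geomMoment hσ hk]
    _ = _ := by
        rw [Finset.sum_congr rfl hterm, ← Finset.mul_sum, quasiRho_zero a hσ]
        ring

end quasiRho

theorem recurrence_eq_explicit_general (σ a : ℝ) (hσ : 1 < σ) (r : ℕ → ℝ)
    (h0 : r 0 = (σ * Real.exp (-a) - 1) / (σ - 1))
    (hrec : ∀ k : ℕ, 1 ≤ k →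
      r k = (Real.exp (-a) / ((σ - 1) * r 0 + 1 - Real.exp (-a))) *
        (σ * (a ^ k / (Nat.factorial k : ℝ)) * r 0 +
          ∑ l ∈ Finset.Icc 1 (k - 1),
            (a ^ (k - l) / (Nat.factorial (k - l) : ℝ)) * r l)) :
    ∀ k : ℕ, r k = quasiRho σ a k := by
  have hσ' : 1 < |σ| := hσ.trans_le (le_abs_self σ)
  have hσ1 : σ - 1 ≠ 0 := by linarith
  have hcoef : exp (-a) / ((σ - 1) * r 0 + 1 - exp (-a)) = (σ - 1)⁻¹ := by
    rw [h0, mul_div_cancel₀ _ hσ1,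
      show σ * exp (-a) - 1 + 1 - exp (-a) = (σ - 1) * exp (-a) by ring,
      div_mul_cancel_right₀ (exp_ne_zero _)]
  intro k
  induction k using Nat.strong_induction_on with
  | _ k ih =>
    rcases Nat.eq_zero_or_pos k with rfl | hk
    · rw [h0, quasiRho_zero a hσ']
    · rw [hrec k hk, hcoef, inv_mul_eq_iff_eq_mul₀ hσ1, sub_one_mul_quasiRho a hσ' hk,
        ih 0 hk, Finset.sum_congr rfl fun l hl => by rw [ih l (by grind)]]

/-- Any sequence satisfying the recurrence
`ρ*_0 = (σe^{-a}-1)/(σ-1)`,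
`ρ*_k = (e^{-a}/((σ-1)ρ*_0 + 1 - e^{-a})) (σ (a^k/k!) ρ*_0 + ∑_{l=1}^{k-1} (a^{k-l}/(k-l)!) ρ*_l)`
for `k ≥ 1`, coincides with the sequence given by the explicit formula
`ρ*_k = (σe^{-a}-1)(a^k/k!) ∑_{i≥1} i^k/σ^i`. -/
theorem recurrence_eq_explicit (σ a : ℝ) (hσ : 1 < σ) (ha : 0 < a)
    (h : 1 < σ * Real.exp (-a)) (r : ℕ → ℝ)
    (h0 : r 0 = (σ * Real.exp (-a) - 1) / (σ - 1))
    (hrec : ∀ k : ℕ, 1 ≤ k →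
      r k = (Real.exp (-a) / ((σ - 1) * r 0 + 1 - Real.exp (-a))) *
        (σ * (a ^ k / (Nat.factorial k : ℝ)) * r 0 +
          ∑ l ∈ Finset.Icc 1 (k - 1),
            (a ^ (k - l) / (Nat.factorial (k - l) : ℝ)) * r l)) :
    ∀ k : ℕ, r k = quasiRho σ a k :=
  recurrence_eq_explicit_general σ a hσ r h0 hrec
end

section
/- The expectation of the quasispecies distribution Q(σ,a) is Σ_{k≥0} k ρ*_k = σ a e^{-a}/(σe^{-a} - 1). -/
open Real

lemma quasiAux_eq (x : ℝ) (k : ℕ) :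
    ((k + 1 : ℕ) : ℝ) * x ^ (k + 1) / (Nat.factorial (k + 1) : ℝ)
      = x * (x ^ k / (Nat.factorial k : ℝ)) := by
  have hfac : ((Nat.factorial (k + 1) : ℕ) : ℝ) = ((k : ℝ) + 1) * (Nat.factorial k : ℝ) := by
    rw [Nat.factorial_succ]; push_cast; ring
  have hk : (Nat.factorial k : ℝ) ≠ 0 := Nat.cast_ne_zero.2 (Nat.factorial_ne_zero k)
  have hk1 : ((k : ℝ) + 1) ≠ 0 := by positivity
  rw [hfac]
  push_cast
  field_simp
  ring

lemma quasiAux_summable (x : ℝ) :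
    Summable (fun k : ℕ => (k : ℝ) * x ^ k / (Nat.factorial k : ℝ)) := by
  rw [← summable_nat_add_iff 1]
  have : (fun k : ℕ => ((k + 1 : ℕ) : ℝ) * x ^ (k + 1) / (Nat.factorial (k + 1) : ℝ))
      = fun k : ℕ => x * (x ^ k / (Nat.factorial k : ℝ)) := by
    funext k; exact quasiAux_eq x k
  simp only [Nat.cast_add, Nat.cast_one] at this ⊢
  rw [show (fun k : ℕ => ((k : ℝ) + 1) * x ^ (k + 1) / (Nat.factorial (k + 1) : ℝ))
      = fun k : ℕ => x * (x ^ k / (Nat.factorial k : ℝ)) by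
    funext k
    have := quasiAux_eq x k
    push_cast at this
    exact this]
  exact (Real.summable_pow_div_factorial x).mul_left x

lemma quasiAux_tsum (x : ℝ) :
    ∑' k : ℕ, (k : ℝ) * x ^ k / (Nat.factorial k : ℝ) = x * Real.exp x := by
  rw [Summable.tsum_eq_zero_add (quasiAux_summable x), tsum_congr (quasiAux_eq x), tsum_mul_left]
  have h0 : ((0 : ℕ) : ℝ) * x ^ 0 / (Nat.factorial 0 : ℝ) = 0 := by simp
  rw [h0, zero_add]
  congr 1
  rw [Real.exp_eq_exp_ℝ, NormedSpace.exp_eq_tsum_div]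

/-- The expectation of the quasispecies distribution `Q(σ,a)` is
`∑_{k≥0} k ρ*_k = σ a e^{-a} / (σ e^{-a} - 1)`. -/
theorem quasiRho_expectation (σ a : ℝ) (hσ : 1 < σ) (ha : 0 < a)
    (h : 1 < σ * Real.exp (-a)) :
    ∑' k : ℕ, (k : ℝ) * quasiRho σ a k =
      σ * a * Real.exp (-a) / (σ * Real.exp (-a) - 1) := by
  set E := Real.exp (-a) with hE
  set C := σ * E - 1 with hC
  have hσ0 : (0 : ℝ) < σ := lt_trans one_pos hσ
  have ht0 : (0 : ℝ) < Real.exp a := Real.exp_pos a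
  have hEt : E = (Real.exp a)⁻¹ := by rw [hE, Real.exp_neg]
  have htσ : Real.exp a < σ := by
    have := mul_lt_mul_of_pos_right h ht0
    rwa [one_mul, mul_assoc, hEt, inv_mul_cancel₀ (ne_of_gt ht0), mul_one] at this
  set q := Real.exp a / σ with hq
  have hq0 : 0 < q := div_pos ht0 hσ0
  have hq1 : q < 1 := (div_lt_one hσ0).2 htσ
  have hqnorm : ‖q‖ < 1 := by rw [Real.norm_eq_abs, abs_of_pos hq0]; exact hq1
  -- the double-indexed summand
  set f : ℕ → ℕ → ℝ := fun k i =>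
    ((k : ℝ) * a ^ k / (Nat.factorial k : ℝ)) * (((i + 1 : ℕ) : ℝ) ^ k / σ ^ (i + 1))
    with hf
  -- inner sum over k for fixed i
  have hrow : ∀ i : ℕ, ∑' k : ℕ, f k i = a * ((i : ℝ) + 1) * q ^ (i + 1) := by
    intro i
    set x := a * ((i : ℝ) + 1) with hx
    have h1 : ∀ k : ℕ, f k i
        = ((k : ℝ) * x ^ k / (Nat.factorial k : ℝ)) * (1 / σ ^ (i + 1)) := by
      intro k
      rw [hf, hx]
      push_cast
      rw [mul_pow]
      ring
    rw [tsum_congr h1, tsum_mul_right, quasiAux_tsum]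
    have hexp : Real.exp x = Real.exp a ^ (i + 1) := by
      rw [hx, mul_comm, ← Real.exp_nat_mul]
      push_cast
      try ring_nf
    rw [hexp, hq, div_pow]
    field_simp
    try ring
  -- summability of each row (over k)
  have hrow_summable : ∀ i : ℕ, Summable fun k => f k i := by
    intro i
    have h1 : (fun k : ℕ => f k i)
        = fun k : ℕ => ((k : ℝ) * (a * ((i : ℝ) + 1)) ^ k / (Nat.factorial k : ℝ))
            * (1 / σ ^ (i + 1)) := by
      funext k
      rw [hf]
      push_cast
      rw [mul_pow]
      ring
    rw [h1]
    exact (quasiAux_summable _).mul_right _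
  -- summability of column sums (geometric-type)
  have hgeom : Summable (fun n : ℕ => (n : ℝ) * q ^ n) :=
    (hasSum_coe_mul_geometric_of_norm_lt_one hqnorm).summable
  have hgeom_tsum : ∑' n : ℕ, (n : ℝ) * q ^ n = q / (1 - q) ^ 2 :=
    tsum_coe_mul_geometric_of_norm_lt_one hqnorm
  have hshift_summable : Summable (fun i : ℕ => ((i : ℝ) + 1) * q ^ (i + 1)) := by
    have := (summable_nat_add_iff 1).2 hgeom
    simpa using this
  have hshift_tsum : ∑' i : ℕ, ((i : ℝ) + 1) * q ^ (i + 1) = q / (1 - q) ^ 2 := by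
    rw [← hgeom_tsum, Summable.tsum_eq_zero_add hgeom]
    push_cast
    simp
  have hcol_summable : Summable (fun i : ℕ => a * ((i : ℝ) + 1) * q ^ (i + 1)) := by
    have := hshift_summable.mul_left a
    simpa [mul_assoc] using this
  -- summability of the double sum (uncurried, with i outer)
  have hnonneg : ∀ p : ℕ × ℕ, 0 ≤ f p.2 p.1 := by
    intro p
    rw [hf]
    have h1 : (0:ℝ) ≤ (p.2 : ℝ) * a ^ p.2 / (Nat.factorial p.2 : ℝ) := by positivity
    have h2 : (0:ℝ) ≤ ((p.1 + 1 : ℕ) : ℝ) ^ p.2 / σ ^ (p.1 + 1) := by positivity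
    exact mul_nonneg h1 h2
  have huncurry : Summable (Function.uncurry (fun i k => f k i)) := by
    have hnn : 0 ≤ (Function.uncurry (fun i k => f k i)) := fun p => hnonneg p
    rw [summable_prod_of_nonneg hnn]
    constructor
    · intro i; exact hrow_summable i
    · exact Summable.congr hcol_summable (fun i => (hrow i).symm)
  have hswap : ∑' (k : ℕ) (i : ℕ), f k i = ∑' (i : ℕ) (k : ℕ), f k i :=
    Summable.tsum_comm huncurry
  -- rewrite the LHS
  have hLHS : ∑' k : ℕ, (k : ℝ) * quasiRho σ a k = C * ∑' (k : ℕ) (i : ℕ), f k i := by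
    rw [← tsum_mul_left]
    apply tsum_congr
    intro k
    rw [quasiRho, ← hE, ← hC]
    have ht : ∑' i : ℕ, f k i
        = ((k : ℝ) * a ^ k / (Nat.factorial k : ℝ))
            * ∑' i : ℕ, ((i + 1 : ℕ) : ℝ) ^ k / σ ^ (i + 1) := by
      simp only [hf]
      exact tsum_mul_left
    rw [ht]
    ring
  rw [hLHS, hswap]
  have h2 : ∑' (i : ℕ) (k : ℕ), f k i = a * (q / (1 - q) ^ 2) := by
    rw [tsum_congr hrow]
    have h3 : (fun i : ℕ => a * ((i : ℝ) + 1) * q ^ (i + 1))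
        = fun i : ℕ => a * (((i : ℝ) + 1) * q ^ (i + 1)) := by
      funext i; ring
    rw [h3, tsum_mul_left, hshift_tsum]
  rw [h2]
  -- final algebra
  have hC0 : C ≠ 0 := by
    have : 0 < C := sub_pos.2 h
    exact ne_of_gt this
  have h1q : (1 : ℝ) - q ≠ 0 := ne_of_gt (sub_pos.2 hq1)
  have hσne : σ ≠ 0 := ne_of_gt hσ0
  have htne : Real.exp a ≠ 0 := ne_of_gt ht0
  have hs : (0 : ℝ) < σ - Real.exp a := sub_pos.2 htσ
  have hC' : C = (σ - Real.exp a) / Real.exp a := by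
    rw [hC, hEt]; field_simp
  have h1q' : (1 : ℝ) - q = (σ - Real.exp a) / σ := by
    rw [hq]; field_simp
  rw [hC', h1q', hq, hEt, div_pow]
  field_simp
end

section
/- The variance of the quasispecies distribution Q(σ,a) equals σ a e^{-a} (σ e^{-a} + a - 1)/(σe^{-a} - 1)^2. -/
/-!
With `r = e^a/σ < 1`, the quasispecies law is a mixture of Poisson laws of means `a(n+1)` with
geometric weights `(1-r) r^n`. By Tonelli, the second moment about `μ` is the average of the Poisson
second moments `(a(n+1) - μ)^2 + a(n+1)`. For `μ = a/(1-r)`, the mean of the mixture, this is the law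
of total variance `a^2 Var(N+1) + a E(N+1) = a^2 r/(1-r)^2 + a/(1-r)`, which at `r = (σe^{-a})⁻¹` is
the claimed formula.
-/

open Real

open Nat

theorem hasSum_tsum_swap_of_nonneg {β γ : Type*} {f : β → γ → ℝ} {g : β → ℝ} {s : ℝ}
    (hf : ∀ b c, 0 ≤ f b c) (hg : ∀ b, HasSum (f b) (g b)) (hs : HasSum g s) :
    HasSum (fun c ↦ ∑' b, f b c) s := by
  have hsum : Summable (Function.uncurry f) :=
    (summable_prod_of_nonneg fun p ↦ hf p.1 p.2).2
      ⟨fun b ↦ (hg b).summable, hs.summable.congr fun b ↦ (hg b).tsum_eq.symm⟩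
  have htot : HasSum (Function.uncurry f) s := by
    convert hsum.hasSum
    exact ((hsum.hasSum.prod_fiberwise hg).unique hs).symm
  exact ((Equiv.prodComm γ β).hasSum_iff.2 htot).prod_fiberwise fun c ↦
    (hsum.prod_symm.prod_factor c).hasSum

theorem hasSum_natCast_mul_pow_div_factorial {g : ℕ → ℝ} {x s : ℝ}
    (h : HasSum (fun k : ℕ ↦ g (k + 1) * (x ^ k / k !)) s) :
    HasSum (fun k : ℕ ↦ k * g k * (x ^ k / k !)) (x * s) := by
  refine (hasSum_nat_add_iff' 1).1 ?_
  simp only [Finset.range_one, Finset.sum_singleton, CharP.cast_eq_zero, zero_mul, sub_zero]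
  refine (h.mul_left x).congr_fun fun k ↦ ?_
  rw [factorial_succ, pow_succ]
  push_cast
  field_simp

theorem hasSum_sq_sub_mul_poisson (x μ : ℝ) :
    HasSum (fun k : ℕ ↦ ((k : ℝ) - μ) ^ 2 * (exp (-x) * x ^ k / k !)) ((x - μ) ^ 2 + x) := by
  have h0 : HasSum (fun k : ℕ ↦ x ^ k / k !) (exp x) := by
    rw [exp_eq_exp_ℝ]
    exact NormedSpace.expSeries_div_hasSum_exp x
  have h1 : HasSum (fun k : ℕ ↦ (k : ℝ) * (x ^ k / k !)) (x * exp x) := by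
    simpa using hasSum_natCast_mul_pow_div_factorial (g := 1) (by simpa using h0)
  have h2 : HasSum (fun k : ℕ ↦ (k : ℝ) ^ 2 * (x ^ k / k !)) (x * (x * exp x + exp x)) := by
    refine (hasSum_natCast_mul_pow_div_factorial (g := (↑)) ((h1.add h0).congr_fun ?_)).congr_fun
      fun k ↦ by ring
    intro k
    push_cast
    ring
  have hvalue : (x - μ) ^ 2 + x =
      exp (-x) * (x * (x * exp x + exp x) - 2 * μ * (x * exp x) + μ ^ 2 * exp x) := by
    rw [exp_neg]
    field_simp
    ring
  rw [hvalue]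
  exact (((h2.sub (h1.mul_left (2 * μ))).add (h0.mul_left (μ ^ 2))).mul_left (exp (-x))).congr_fun
    fun k ↦ by ring

section Geometric

variable {𝕜 : Type*} [NormedField 𝕜] {r : 𝕜}

theorem hasSum_geometric_mul_succ (hr : ‖r‖ < 1) :
    HasSum (fun n : ℕ ↦ (1 - r) * r ^ n * (n + 1)) (1 - r)⁻¹ := by
  have h1r : 1 - r ≠ 0 := sub_ne_zero.2 fun h ↦ by simp [← h] at hr
  rw [show (1 - r)⁻¹ = (1 - r) * (1 / (1 - r) ^ (1 + 1)) by field_simp]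
  refine ((hasSum_choose_mul_geometric_of_norm_lt_one 1 hr).mul_left (1 - r)).congr_fun fun n ↦ ?_
  simp only [choose_one_right, cast_add, cast_one]
  ring

theorem hasSum_geometric_mul_sq_succ_sub (hr : ‖r‖ < 1) :
    HasSum (fun n : ℕ ↦ (1 - r) * r ^ n * ((n + 1) - (1 - r)⁻¹) ^ 2) (r / (1 - r) ^ 2) := by
  have h1r : 1 - r ≠ 0 := sub_ne_zero.2 fun h ↦ by simp [← h] at hr
  have h2 := (hasSum_choose_mul_geometric_of_norm_lt_one 2 hr).mul_left (2 * (1 - r))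
  have h1 := hasSum_geometric_mul_succ hr
  have h0 := (hasSum_geometric_of_norm_lt_one hr).mul_left (1 - r)
  -- `(n + 1 - m) ^ 2 = 2 * (n + 2).choose 2 - (1 + 2 * m) * (n + 1) + m ^ 2` with `m = (1 - r)⁻¹`
  rw [show r / (1 - r) ^ 2 = 2 * (1 - r) * (1 / (1 - r) ^ (2 + 1))
      - (1 + 2 * (1 - r)⁻¹) * (1 - r)⁻¹ + (1 - r)⁻¹ ^ 2 * ((1 - r) * (1 - r)⁻¹) by
    field_simp
    ring]
  refine ((h2.sub (h1.mul_left (1 + 2 * (1 - r)⁻¹))).add (h0.mul_left ((1 - r)⁻¹ ^ 2))).congr_fun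
    fun n ↦ ?_
  have hch : (((n + 2).choose 2 * 2 : ℕ) : 𝕜) = (((n + 2) * (n + 1) : ℕ) : 𝕜) := by
    rw [choose_two_right, Nat.div_mul_cancel (even_mul_pred_self _).two_dvd]
    rfl
  push_cast at hch
  linear_combination -(1 - r) * r ^ n * hch

theorem hasSum_geometric_mixture_variance (hr : ‖r‖ < 1) (a : 𝕜) :
    HasSum (fun n : ℕ ↦ (1 - r) * r ^ n * ((a * (n + 1) - a / (1 - r)) ^ 2 + a * (n + 1)))
      (a ^ 2 * r / (1 - r) ^ 2 + a / (1 - r)) := by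
  rw [mul_div_assoc, div_eq_mul_inv a]
  refine (((hasSum_geometric_mul_sq_succ_sub hr).mul_left (a ^ 2)).add
    ((hasSum_geometric_mul_succ hr).mul_left a)).congr_fun fun n ↦ ?_
  ring

end Geometric

theorem quasiRho_eq_tsum {σ : ℝ} (hσ : σ ≠ 0) (a : ℝ) (k : ℕ) :
    quasiRho σ a k = ∑' n : ℕ, (1 - (σ * exp (-a))⁻¹) * (σ * exp (-a))⁻¹ ^ n *
      (exp (-(a * (n + 1))) * (a * (n + 1)) ^ k / k !) := by
  rw [quasiRho, ← tsum_mul_left]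
  refine tsum_congr fun n ↦ ?_
  rw [show -(a * (n + 1)) = (n + 1 : ℕ) * -a by push_cast; ring, exp_nat_mul]
  simp only [mul_inv, mul_pow, inv_pow]
  push_cast
  field_simp
  ring

theorem quasiRho_variance_general (σ a : ℝ) (ha : 0 < a)
    (h : 1 < σ * Real.exp (-a)) :
    ∑' k : ℕ, ((k : ℝ) - σ * a * Real.exp (-a) / (σ * Real.exp (-a) - 1)) ^ 2 *
        quasiRho σ a k =
      σ * a * Real.exp (-a) * (σ * Real.exp (-a) + a - 1) /
        (σ * Real.exp (-a) - 1) ^ 2 := by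
  have hσ : σ ≠ 0 := by rintro rfl; norm_num at h
  set q := σ * exp (-a) with hq
  set r := q⁻¹ with hr
  have hr0 : 0 < r := inv_pos.2 (zero_lt_one.trans h)
  have hr1 : r < 1 := inv_lt_one_of_one_lt₀ h
  have hμ : σ * a * exp (-a) / (q - 1) = a / (1 - r) := by
    rw [hr]; field_simp; ring
  rw [hμ]
  have hmix := hasSum_tsum_swap_of_nonneg
    (f := fun (n k : ℕ) ↦ ((k : ℝ) - a / (1 - r)) ^ 2 *
      ((1 - r) * r ^ n * (exp (-(a * (n + 1))) * (a * (n + 1)) ^ k / k !)))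
    (fun n k ↦ by have := sub_pos.2 hr1; positivity)
    (fun n ↦ ((hasSum_sq_sub_mul_poisson (a * (n + 1)) (a / (1 - r))).mul_left
      ((1 - r) * r ^ n)).congr_fun fun k ↦ by ring)
    (hasSum_geometric_mixture_variance (by rwa [norm_of_nonneg hr0.le]) a)
  calc _ = ∑' k : ℕ, ∑' n : ℕ, ((k : ℝ) - a / (1 - r)) ^ 2 *
        ((1 - r) * r ^ n * (exp (-(a * (n + 1))) * (a * (n + 1)) ^ k / k !)) := by
        simp_rw [quasiRho_eq_tsum hσ, ← hq, ← hr, tsum_mul_left]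
    _ = a ^ 2 * r / (1 - r) ^ 2 + a / (1 - r) := hmix.tsum_eq
    _ = _ := by rw [hr]; field_simp; ring

/-- The variance of the quasispecies distribution `Q(σ,a)`, whose mean is
`σ a e^{-a}/(σe^{-a}-1)`, equals `σ a e^{-a} (σ e^{-a} + a - 1)/(σe^{-a} - 1)^2`. -/
theorem quasiRho_variance (σ a : ℝ) (hσ : 1 < σ) (ha : 0 < a)
    (h : 1 < σ * Real.exp (-a)) :
    ∑' k : ℕ, ((k : ℝ) - σ * a * Real.exp (-a) / (σ * Real.exp (-a) - 1)) ^ 2 *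
        quasiRho σ a k =
      σ * a * Real.exp (-a) * (σ * Real.exp (-a) + a - 1) /
        (σ * Real.exp (-a) - 1) ^ 2 :=
  quasiRho_variance_general σ a ha h
end
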